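/- Let J¹_{[I]}, J²_{[I]}, J³_{[I]} be the 8×8 real matrices obtained as the coefficient matrices of α₁, α₂, α₃ in the matrix Σₓ αₓ J^x_{[I]} whose rows are: row1 = (0,0,0, -α₁/2, -√3α₃/4, -α₂/4, √3α₂/4, -α₃/4); row2 = (0,0, α₁/2, 0, -α₃/4, -√3α₂/4, -α₂/4, √3α₃/4); row3 = (0, -α₁/2, 0, 0, -α₂/4, √3α₃/4, α₃/4, √3α₂/4); row4 = (α₁/2, 0,0,0, √3α₂/4, -α₃/4, √3α₃/4, α₂/4); row5 = (√3α₃/4, α₃/4, α₂/4, -√3α₂/4, 0, √3α₁/4, -α₁/4, 0); row6 = (α₂/4, √3α₂/4, -√3α₃/4, α₃/4, -√3α₁/4, 0, 0, α₁/4); row7 = (-√3α₂/4, α₂/4, -α₃/4, -√3α₃/4, α₁/4, 0, 0, √3α₁/4); row8 = (α₃/4, -√3α₃/4, -√3α₂/4, -α₂/4, 0, -α₁/4, -√3α₁/4, 0). Then each J^x_{[I]} is antisymmetric, they satisfy the su(2) commutation relations [J¹_{[I]}, J²_{[I]}] = J³_{[I]}, [J²_{[I]}, J³_{[I]}] = J¹_{[I]},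 [J³_{[I]}, J¹_{[I]}] = J²_{[I]}, and the Casimir is (J¹_{[I]})² + (J²_{[I]})² + (J³_{[I]})² = -(3/4)·1₈ (so ℝ⁸ carries the spin-1/2 representation with multiplicity four). -/

import Mathlib

/-!
Write `J^x_{[I]} = ¼ K^x`. The entries of `K^x` are of the form `a + b√3` with `a, b ∈ ℤ`, so
`K^x` is the image of a matrix over `ℤ[√3]` under the ring embedding `ℤ[√3] → ℝ`. Over `ℤ[√3]`
antisymmetry, `[K¹, K²] = 4 K³` (cyclically) and `Σ (K^x)² = -12` are identities between
integer-valued data, checked by evaluation; a ring hom carries them to `ℝ`, and rescaling by `¼`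
gives the `su(2)` relations with Casimir `-3/4`.
-/

noncomputable section

open Matrix

/-- The 8×8 matrix `Σₓ αₓ J^x_{[I]}` from the holonomy algebra of
`G_{2(2)}/(SU(2)×SU(2))`. -/
def JfamI (a1 a2 a3 : ℝ) : Matrix (Fin 8) (Fin 8) ℝ :=
  let s := Real.sqrt 3
  !![0, 0, 0, -a1/2, -s*a3/4, -a2/4, s*a2/4, -a3/4;
     0, 0, a1/2, 0, -a3/4, -s*a2/4, -a2/4, s*a3/4;
     0, -a1/2, 0, 0, -a2/4, s*a3/4, a3/4, s*a2/4;
     a1/2, 0, 0, 0, s*a2/4, -a3/4, s*a3/4, a2/4;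
     s*a3/4, a3/4, a2/4, -s*a2/4, 0, s*a1/4, -a1/4, 0;
     a2/4, s*a2/4, -s*a3/4, a3/4, -s*a1/4, 0, 0, a1/4;
     -s*a2/4, a2/4, -a3/4, -s*a3/4, a1/4, 0, 0, s*a1/4;
     a3/4, -s*a3/4, -s*a2/4, -a2/4, 0, -a1/4, -s*a1/4, 0]

open Zsqrtd in
def scaledJI₁ : Matrix (Fin 8) (Fin 8) (ℤ√3) :=
  !![0, 0, 0, -2, 0, 0, 0, 0;
     0, 0, 2, 0, 0, 0, 0, 0;
     0, -2, 0, 0, 0, 0, 0, 0;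
     2, 0, 0, 0, 0, 0, 0, 0;
     0, 0, 0, 0, 0, sqrtd, -1, 0;
     0, 0, 0, 0, -sqrtd, 0, 0, 1;
     0, 0, 0, 0, 1, 0, 0, sqrtd;
     0, 0, 0, 0, 0, -1, -sqrtd, 0]

open Zsqrtd in
def scaledJI₂ : Matrix (Fin 8) (Fin 8) (ℤ√3) :=
  !![0, 0, 0, 0, 0, -1, sqrtd, 0;
     0, 0, 0, 0, 0, -sqrtd, -1, 0;
     0, 0, 0, 0, -1, 0, 0, sqrtd;
     0, 0, 0, 0, sqrtd, 0, 0, 1;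
     0, 0, 1, -sqrtd, 0, 0, 0, 0;
     1, sqrtd, 0, 0, 0, 0, 0, 0;
     -sqrtd, 1, 0, 0, 0, 0, 0, 0;
     0, 0, -sqrtd, -1, 0, 0, 0, 0]

open Zsqrtd in
def scaledJI₃ : Matrix (Fin 8) (Fin 8) (ℤ√3) :=
  !![0, 0, 0, 0, -sqrtd, 0, 0, -1;
     0, 0, 0, 0, -1, 0, 0, sqrtd;
     0, 0, 0, 0, 0, sqrtd, 1, 0;
     0, 0, 0, 0, 0, -1, sqrtd, 0;
     sqrtd, 1, 0, 0, 0, 0, 0, 0;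
     0, 0, -sqrtd, 1, 0, 0, 0, 0;
     0, 0, -1, -sqrtd, 0, 0, 0, 0;
     1, -sqrtd, 0, 0, 0, 0, 0, 0]

theorem scaledJI₁_transpose : scaledJI₁ᵀ = -scaledJI₁ := by decide

theorem scaledJI₂_transpose : scaledJI₂ᵀ = -scaledJI₂ := by decide

theorem scaledJI₃_transpose : scaledJI₃ᵀ = -scaledJI₃ := by decide

theorem scaledJI_commutator₁₂ :
    scaledJI₁ * scaledJI₂ - scaledJI₂ * scaledJI₁ = 4 • scaledJI₃ := by decide

theorem scaledJI_commutator₂₃ :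
    scaledJI₂ * scaledJI₃ - scaledJI₃ * scaledJI₂ = 4 • scaledJI₁ := by decide

theorem scaledJI_commutator₃₁ :
    scaledJI₃ * scaledJI₁ - scaledJI₁ * scaledJI₃ = 4 • scaledJI₂ := by decide

theorem scaledJI_casimir :
    scaledJI₁ * scaledJI₁ + scaledJI₂ * scaledJI₂ + scaledJI₃ * scaledJI₃ = -(12 • 1) := by
  decide

def sqrtThreeToReal : ℤ√3 →+* ℝ :=
  Zsqrtd.lift ⟨√3, by rw [Real.mul_self_sqrt (by norm_num)]; norm_num⟩

theorem JfamI_eq_smul_map (a1 a2 a3 : ℝ) :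
    JfamI a1 a2 a3 = (1/4 : ℝ) • (a1 • scaledJI₁.map sqrtThreeToReal
      + a2 • scaledJI₂.map sqrtThreeToReal + a3 • scaledJI₃.map sqrtThreeToReal) := by
  ext i j
  fin_cases i <;> fin_cases j <;>
    simp [JfamI, scaledJI₁, scaledJI₂, scaledJI₃, sqrtThreeToReal] <;> ring

section QuarterScaling

variable {n : Type*} [Fintype n] [DecidableEq n] {K₁ K₂ K₃ : Matrix n n ℝ}

theorem quarter_smul_commutator (h : K₁ * K₂ - K₂ * K₁ = 4 • K₃) :
    (1/4 : ℝ) • K₁ * (1/4 : ℝ) • K₂ - (1/4 : ℝ) • K₂ * (1/4 : ℝ) • K₁ = (1/4 : ℝ) • K₃ := by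
  rw [smul_mul_smul_comm, smul_mul_smul_comm, ← smul_sub, h]
  module

theorem quarter_smul_casimir (h : K₁ * K₁ + K₂ * K₂ + K₃ * K₃ = -(12 • 1)) :
    (1/4 : ℝ) • K₁ * (1/4 : ℝ) • K₁ + (1/4 : ℝ) • K₂ * (1/4 : ℝ) • K₂
      + (1/4 : ℝ) • K₃ * (1/4 : ℝ) • K₃ = -((3/4 : ℝ) • (1 : Matrix n n ℝ)) := by
  simp only [smul_mul_smul_comm, ← smul_add, h]
  module

end QuarterScaling

theorem transpose_smul_map_eq_neg {n R S : Type*} [Ring R] [Ring S] (f : R →+* S) (c : S)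
    {K : Matrix n n R} (h : Kᵀ = -K) : (c • K.map f)ᵀ = -(c • K.map f) := by
  rw [transpose_smul, ← transpose_map, h, Matrix.map_neg _ (map_neg f), smul_neg]

/-- the coefficient matrices `J¹_{[I]}, J²_{[I]}, J³_{[I]}` of
`α₁, α₂, α₃` in `Σₓ αₓ J^x_{[I]}` are antisymmetric, satisfy the `su(2)`
commutation relations, and have Casimir `-(3/4)·1₈`. -/
theorem stmt_6 (J1 J2 J3 : Matrix (Fin 8) (Fin 8) ℝ)
    (hJ : ∀ a1 a2 a3 : ℝ, a1 • J1 + a2 • J2 + a3 • J3 = JfamI a1 a2 a3) :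
    (J1ᵀ = -J1 ∧ J2ᵀ = -J2 ∧ J3ᵀ = -J3) ∧
    (J1 * J2 - J2 * J1 = J3 ∧ J2 * J3 - J3 * J2 = J1 ∧ J3 * J1 - J1 * J3 = J2) ∧
    J1 * J1 + J2 * J2 + J3 * J3 = -((3/4 : ℝ) • (1 : Matrix (Fin 8) (Fin 8) ℝ)) := by
  have hJ₁ : J1 = (1/4 : ℝ) • scaledJI₁.map sqrtThreeToReal := by
    simpa [JfamI_eq_smul_map] using hJ 1 0 0
  have hJ₂ : J2 = (1/4 : ℝ) • scaledJI₂.map sqrtThreeToReal := by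
    simpa [JfamI_eq_smul_map] using hJ 0 1 0
  have hJ₃ : J3 = (1/4 : ℝ) • scaledJI₃.map sqrtThreeToReal := by
    simpa [JfamI_eq_smul_map] using hJ 0 0 1
  subst hJ₁ hJ₂ hJ₃
  have h₁₂ := congrArg sqrtThreeToReal.mapMatrix scaledJI_commutator₁₂
  have h₂₃ := congrArg sqrtThreeToReal.mapMatrix scaledJI_commutator₂₃
  have h₃₁ := congrArg sqrtThreeToReal.mapMatrix scaledJI_commutator₃₁
  have hcas := congrArg sqrtThreeToReal.mapMatrix scaledJI_casimir
  simp only [map_sub, map_add, map_mul, map_nsmul, map_neg, map_one,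
    RingHom.mapMatrix_apply] at h₁₂ h₂₃ h₃₁ hcas
  exact ⟨⟨transpose_smul_map_eq_neg _ _ scaledJI₁_transpose,
      transpose_smul_map_eq_neg _ _ scaledJI₂_transpose,
      transpose_smul_map_eq_neg _ _ scaledJI₃_transpose⟩,
    ⟨quarter_smul_commutator h₁₂, quarter_smul_commutator h₂₃, quarter_smul_commutator h₃₁⟩,
    quarter_smul_casimir hcas⟩

end
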